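/- arXiv:2404.10962 — 3 statements merged into one kernel-verified Lean document; each statement's English description precedes it below -/
import Mathlib

section
/- Let G be a connected finite simple graph on at least 2 vertices with the property that every set of γ(G) vertices of G is a dominating set of G. Then γ(G) ≤ 2. -/
open SimpleGraph

/-- `D` is a dominating set of `G`: every vertex not in `D` has a neighbour in `D`. -/
def IsDomSet {V : Type*} (G : SimpleGraph V) (D : Set V) : Prop :=
  ∀ v ∉ D, ∃ u ∈ D, G.Adj u v

/-- The dominating graph of `G`: vertices are dominating sets of `G`, two dominating
sets are adjacent iff their symmetric difference has exactly one element. -/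
def DomGraph {V : Type*} (G : SimpleGraph V) :
    SimpleGraph {D : Set V // IsDomSet G D} where
  Adj A B := (symmDiff A.1 B.1).ncard = 1
  symm := ⟨fun A B h => by
    have h' : (symmDiff A.1 B.1).ncard = 1 := h
    show (symmDiff B.1 A.1).ncard = 1
    rwa [symmDiff_comm]⟩
  loopless := ⟨fun A h => by
    have h' : (symmDiff A.1 A.1).ncard = 1 := h
    simp [symmDiff_self, Set.bot_eq_empty] at h'⟩

/-- The `k`-dominating graph of `G`: vertices are dominating sets of `G` of cardinality
at most `k`, two such sets are adjacent iff their symmetric difference has exactly one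
element. -/
def KDomGraph {V : Type*} (G : SimpleGraph V) (k : ℕ) :
    SimpleGraph {D : Set V // IsDomSet G D ∧ D.ncard ≤ k} where
  Adj A B := (symmDiff A.1 B.1).ncard = 1
  symm := ⟨fun A B h => by
    have h' : (symmDiff A.1 B.1).ncard = 1 := h
    show (symmDiff B.1 A.1).ncard = 1
    rwa [symmDiff_comm]⟩
  loopless := ⟨fun A h => by
    have h' : (symmDiff A.1 A.1).ncard = 1 := h
    simp [symmDiff_self, Set.bot_eq_empty] at h'⟩

/-- A graph is Eulerian iff every vertex has even degree and any two edges lie in the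
same connected component (i.e. at most one component contains an edge). -/
def IsEulerian {W : Type*} (H : SimpleGraph W) : Prop :=
  (∀ v : W, Even (H.neighborSet v).ncard) ∧
  ∀ u v x y : W, H.Adj u v → H.Adj x y → H.Reachable u x

/-- The domination number of `G`: the minimum cardinality of a dominating set. -/
noncomputable def domNumber {V : Type*} (G : SimpleGraph V) : ℕ :=
  sInf {n | ∃ D : Set V, IsDomSet G D ∧ D.ncard = n}


/-!
Suppose `γ = γ(G) ≥ 3` and write `B w = V ∖ N[w]`, the neighbourhood of `w` in `Gᶜ`. A set fails
to dominate exactly when it lies inside some `B w`. Hence `|B w| < γ` (a `γ`-subset of `B w` would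
miss `w`), and every `(γ - 1)`-set, being non-dominating, lies inside and therefore equals some
`B w`. So `w ↦ B w` maps `V` onto the `(γ - 1)`-subsets of `V` and `C(n, γ - 1) ≤ n`. But an edge
`uv` makes `V ∖ {u}` dominating, so `2 ≤ γ - 1 ≤ n - 2`, which forces `C(n, γ - 1) > n`.
-/

namespace Nat

theorem le_choose_of_pos_of_lt {m j : ℕ} (hj : 0 < j) (hjm : j < m) : m ≤ m.choose j := by
  induction m generalizing j with
  | zero => omega
  | succ m ih =>
    obtain ⟨i, rfl⟩ : ∃ i, j = i + 1 := ⟨j - 1, by omega⟩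
    rcases Nat.lt_or_ge (i + 1) m with him | hmi
    · have hpos : 0 < m.choose i := Nat.choose_pos (by omega)
      have := ih (j := i + 1) (by omega) him
      rw [Nat.choose_succ_succ']
      omega
    · obtain rfl : m = i + 1 := by omega
      rw [Nat.choose_succ_self_right]

theorem lt_choose_of_two_le_of_add_two_le {n k : ℕ} (hk : 2 ≤ k) (hkn : k + 2 ≤ n) :
    n < n.choose k := by
  obtain ⟨m, rfl⟩ : ∃ m, n = m + 1 := ⟨n - 1, by omega⟩
  obtain ⟨j, rfl⟩ : ∃ j, k = j + 1 := ⟨k - 1, by omega⟩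
  have h₁ := le_choose_of_pos_of_lt (m := m) (j := j) (by omega) (by omega)
  have h₂ := le_choose_of_pos_of_lt (m := m) (j := j + 1) (by omega) (by omega)
  rw [Nat.choose_succ_succ']
  omega

end Nat

theorem Fintype.choose_card_le_card {α : Type*} [Fintype α] {k : ℕ} (f : α → Set α)
    (hf : ∀ S : Set α, S.ncard = k → ∃ a, S = f a) :
    (Fintype.card α).choose k ≤ Fintype.card α := by
  classical
  rw [← Finset.card_univ, ← Finset.card_powersetCard]
  refine Finset.card_le_card_of_surjOn (fun a => (f a).toFinset) fun s hs => ?_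
  obtain ⟨a, ha⟩ := hf s (by simpa using (Finset.mem_powersetCard.mp hs).2)
  exact ⟨a, Finset.mem_coe.mpr (Finset.mem_univ a), by simp [← ha]⟩

section Domination

variable {V : Type*} {G : SimpleGraph V}

theorem isDomSet_iff_forall_not_subset_compl_neighborSet {S : Set V} :
    IsDomSet G S ↔ ∀ w, ¬ S ⊆ Gᶜ.neighborSet w := by
  simp only [IsDomSet, Set.subset_def, mem_neighborSet, compl_adj]
  constructor
  · rintro hS w hw
    by_cases hwS : w ∈ S
    · exact (hw w hwS).1 rfl
    · obtain ⟨u, huS, hadj⟩ := hS w hwS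
      exact (hw u huS).2 hadj.symm
  · intro hS w hwS
    by_contra! hnone
    exact hS w fun u huS => ⟨fun h => hwS (h ▸ huS), fun hadj => hnone u huS hadj.symm⟩

theorem isDomSet_compl_singleton {u v : V} (huv : G.Adj u v) : IsDomSet G {u}ᶜ := by
  intro w hw
  rw [Set.notMem_compl_iff, Set.mem_singleton_iff] at hw
  exact ⟨v, by simpa [eq_comm] using huv.ne, hw ▸ huv.symm⟩

theorem domNumber_le_ncard {D : Set V} (hD : IsDomSet G D) : domNumber G ≤ D.ncard :=
  Nat.sInf_le ⟨D, hD, rfl⟩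

theorem ncard_compl_neighborSet_lt_domNumber
    (h : ∀ S : Set V, S.ncard = domNumber G → IsDomSet G S) (w : V) :
    (Gᶜ.neighborSet w).ncard < domNumber G := by
  by_contra! hle
  obtain ⟨T, hTw, hT⟩ := Set.exists_subset_card_eq hle
  exact isDomSet_iff_forall_not_subset_compl_neighborSet.mp (h T hT) w hTw

theorem exists_eq_compl_neighborSet_of_ncard_add_one_eq_domNumber [Finite V]
    (h : ∀ S : Set V, S.ncard = domNumber G → IsDomSet G S) {S : Set V}
    (hS : S.ncard + 1 = domNumber G) : ∃ w, S = Gᶜ.neighborSet w := by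
  have hnot : ¬ IsDomSet G S := fun hdom => by have := domNumber_le_ncard hdom; omega
  rw [isDomSet_iff_forall_not_subset_compl_neighborSet] at hnot
  push Not at hnot
  obtain ⟨w, hw⟩ := hnot
  have := ncard_compl_neighborSet_lt_domNumber h w
  exact ⟨w, Set.eq_of_subset_of_ncard_le hw (by omega)⟩

end Domination

/-- If `G` is a connected graph on at least two vertices in which every set of `γ(G)`
vertices is a dominating set, then `γ(G) ≤ 2`. -/
theorem domNumber_le_two_of_all_dominating {V : Type*} [Fintype V] (G : SimpleGraph V)
    (hconn : G.Connected) (hn : 2 ≤ Fintype.card V)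
    (h : ∀ S : Set V, S.ncard = domNumber G → IsDomSet G S) :
    domNumber G ≤ 2 := by
  by_contra! hg
  have : Nontrivial V := Fintype.one_lt_card_iff_nontrivial.mp hn
  obtain ⟨u, hadj⟩ := hconn.preconnected.exists_adj_of_nontrivial (Classical.arbitrary V)
  have hlt : domNumber G < Fintype.card V := by
    have := domNumber_le_ncard (isDomSet_compl_singleton hadj)
    rw [Set.ncard_compl, Set.ncard_singleton, Nat.card_eq_fintype_card] at this
    omega
  have hchoose := Fintype.choose_card_le_card (k := domNumber G - 1) (Gᶜ.neighborSet ·)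
    fun S hS => exists_eq_compl_neighborSet_of_ncard_add_one_eq_domNumber h (by omega)
  have := Nat.lt_choose_of_two_le_of_add_two_le (n := Fintype.card V) (k := domNumber G - 1)
    (by omega) (by omega)
  omega
end

section
/- Let G be a connected finite simple graph on n > 1 vertices with the property that every set of γ(G) vertices of G is a dominating set of G, and let k be an integer with γ(G) < k < n. Then the k-dominating graph D_k(G) is Eulerian if and only if either (i) G is the complete graph K_n with n odd and k = 2, or (ii) n is even, n ≥ 4, G is the cocktail party graph on n vertices, and k is even. -/
open SimpleGraph

/-- `G` is a cocktail party graph: the complete graph with a perfect matching removed,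
i.e. there is a fixed-point-free involutive pairing `f` of the vertices such that two
distinct vertices are adjacent iff they are not paired. -/
def IsCocktailParty {V : Type*} (G : SimpleGraph V) : Prop :=
  ∃ f : V → V, Function.Involutive f ∧ (∀ v, f v ≠ v) ∧
    ∀ u v, G.Adj u v ↔ u ≠ v ∧ f u ≠ v

/-!
If every `γ`-set dominates, a set dominates iff it has at least `γ = γ(G)` elements, so `D_k(G)`
consists of all sets of sizes `γ, …, k`. Such a set `A` has `n - |A|` neighbours above it (if
`|A| < k`) and `|A|` below it (if `|A| > γ`), and two of them are joined by toggling the elements of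
their symmetric difference one at a time. Hence `D_k(G)` is Eulerian iff `n - γ` and `k` are even,
and also `n` when `γ + 2 ≤ k`. On the other hand every `(γ - 1)`-set is the non-neighbourhood of
some vertex, so `C(n, γ - 1) ≤ n`, which forces `γ ≤ 2`: `G` is complete if `γ = 1` and a cocktail
party graph if `γ = 2`.
-/

lemma Nat.lt_choose_of_two_le {n j : ℕ} (hj : 2 ≤ j) (hjn : j + 2 ≤ n) : n < n.choose j := by
  induction j, hj using Nat.le_induction generalizing n with
  | base =>
    rw [Nat.choose_two_right]
    apply Nat.lt_of_succ_le
    rw [Nat.le_div_iff_mul_le (by norm_num)]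
    obtain ⟨n, rfl⟩ : ∃ n', n = n' + 4 := ⟨n - 4, by omega⟩
    rw [show n + 4 - 1 = n + 3 by omega]
    nlinarith
  | succ j hj ih =>
    obtain ⟨n, rfl⟩ : ∃ n', n = n' + 1 := ⟨n - 1, by omega⟩
    rw [Nat.choose_succ_succ']
    have := ih (n := n) (by omega)
    have := Nat.choose_pos (n := n) (k := j + 1) (by omega)
    omega

namespace Set
variable {α : Type*} {A : Set α} {v : α}

lemma symmDiff_singleton_of_mem (hv : v ∈ A) : symmDiff A {v} = A \ {v} := by
  ext x; by_cases hx : x = v <;> simp [Set.mem_symmDiff, hx, hv]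

lemma symmDiff_singleton_of_notMem (hv : v ∉ A) : symmDiff A {v} = insert v A := by
  ext x; by_cases hx : x = v <;> simp [Set.mem_symmDiff, hx, hv]

lemma ncard_symmDiff_singleton_of_mem (hv : v ∈ A) :
    (symmDiff A {v}).ncard = A.ncard - 1 := by
  rw [symmDiff_singleton_of_mem hv, ncard_sdiff_singleton_of_mem hv]

lemma ncard_symmDiff_singleton_of_notMem [Finite α] (hv : v ∉ A) :
    (symmDiff A {v}).ncard = A.ncard + 1 := by
  rw [symmDiff_singleton_of_notMem hv, ncard_insert_of_notMem hv]

end Set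

section Domination
variable {V : Type*} {G : SimpleGraph V}

lemma IsDomSet.mono {A B : Set V} (hA : IsDomSet G A) (hAB : A ⊆ B) : IsDomSet G B := by
  intro v hvB
  obtain ⟨u, huA, huv⟩ := hA v fun hvA => hvB (hAB hvA)
  exact ⟨u, hAB huA, huv⟩

lemma not_isDomSet_empty [Nonempty V] : ¬ IsDomSet G ∅ := by
  intro h
  obtain ⟨u, hu, -⟩ := h (Classical.arbitrary V) (Set.notMem_empty _)
  exact hu

lemma not_isDomSet_iff {S : Set V} : ¬ IsDomSet G S ↔ ∃ w, S ⊆ Gᶜ.neighborSet w := by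
  simp only [IsDomSet, not_forall, not_exists, not_and, exists_prop, Set.subset_def,
    mem_neighborSet, compl_adj]
  constructor
  · rintro ⟨w, hwS, hw⟩
    exact ⟨w, fun u hu => ⟨fun hwu => hwS (hwu ▸ hu), fun hwu => hw u hu hwu.symm⟩⟩
  · rintro ⟨w, hw⟩
    exact ⟨w, fun hwS => (hw w hwS).1 rfl, fun u hu huw => (hw u hu).2 huw.symm⟩

lemma isDomSet_iff_domNumber_le (h : ∀ S : Set V, S.ncard = domNumber G → IsDomSet G S)
    (S : Set V) : IsDomSet G S ↔ domNumber G ≤ S.ncard := by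
  refine ⟨fun hS => Nat.sInf_le ⟨S, hS, rfl⟩, fun hle => ?_⟩
  obtain ⟨T, hTS, hT⟩ := Set.exists_subset_card_eq hle
  exact (h T hT).mono hTS

end Domination

section KDomGraph
variable {V : Type*} {G : SimpleGraph V} {k m : ℕ}

lemma kDomGraph_adj_iff {A B : {D : Set V // IsDomSet G D ∧ D.ncard ≤ k}} :
    (KDomGraph G k).Adj A B ↔ ∃ v, B.1 = symmDiff A.1 {v} := by
  change (symmDiff A.1 B.1).ncard = 1 ↔ _
  constructor
  · intro h
    obtain ⟨v, hv⟩ := Set.ncard_eq_one.1 h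
    exact ⟨v, by rw [← hv, symmDiff_symmDiff_cancel_left]⟩
  · rintro ⟨v, hv⟩
    rw [hv, symmDiff_symmDiff_cancel_left, Set.ncard_singleton]

lemma ncard_neighborSet_kDomGraph (A : {D : Set V // IsDomSet G D ∧ D.ncard ≤ k}) :
    ((KDomGraph G k).neighborSet A).ncard =
      {v | IsDomSet G (symmDiff A.1 {v}) ∧ (symmDiff A.1 {v}).ncard ≤ k}.ncard := by
  have himage : Subtype.val '' (KDomGraph G k).neighborSet A =
      (fun v => symmDiff A.1 {v}) '' {v | IsDomSet G (symmDiff A.1 {v}) ∧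
        (symmDiff A.1 {v}).ncard ≤ k} := by
    ext D
    constructor
    · rintro ⟨B, hB, rfl⟩
      obtain ⟨v, hv⟩ := kDomGraph_adj_iff.1 hB
      exact ⟨v, show _ ∧ _ from hv ▸ B.2, hv.symm⟩
    · rintro ⟨v, hv, rfl⟩
      exact ⟨⟨_, hv⟩, kDomGraph_adj_iff.2 ⟨v, rfl⟩, rfl⟩
  rw [← Set.ncard_image_of_injective _ Subtype.val_injective, himage,
    Set.ncard_image_of_injective _ fun u v huv =>
      Set.singleton_injective (symmDiff_right_injective _ huv)]

lemma ncard_neighborSet_kDomGraph_of_isDomSet_iff [Fintype V]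
    (hdom : ∀ S : Set V, IsDomSet G S ↔ m ≤ S.ncard)
    (A : {D : Set V // IsDomSet G D ∧ D.ncard ≤ k}) :
    ((KDomGraph G k).neighborSet A).ncard =
      (if A.1.ncard < k then Fintype.card V - A.1.ncard else 0) +
        (if m < A.1.ncard then A.1.ncard else 0) := by
  have hmA := (hdom A.1).1 A.2.1
  have hAk := A.2.2
  have hsplit : {v | IsDomSet G (symmDiff A.1 {v}) ∧ (symmDiff A.1 {v}).ncard ≤ k} =
      (if A.1.ncard < k then A.1ᶜ else ∅) ∪ (if m < A.1.ncard then A.1 else ∅) := by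
    ext v
    simp only [hdom, Set.mem_ofPred, Set.mem_union, Set.mem_ite_empty_right, Set.mem_compl_iff]
    by_cases hv : v ∈ A.1
    · have := (Set.ncard_pos (Set.toFinite _)).2 ⟨v, hv⟩
      simp only [Set.ncard_symmDiff_singleton_of_mem hv, hv, not_true_eq_false, and_false,
        and_true, false_or]
      omega
    · simp only [Set.ncard_symmDiff_singleton_of_notMem hv, hv, not_false_eq_true, and_false,
        and_true, or_false]
      omega
  have hAn : A.1.ncard ≤ Fintype.card V := by
    rw [← Nat.card_eq_fintype_card]; exact Set.ncard_le_card _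
  have hcompl : A.1ᶜ.ncard = Fintype.card V - A.1.ncard := by
    rw [Set.ncard_compl, Nat.card_eq_fintype_card]
  rw [ncard_neighborSet_kDomGraph, hsplit]
  split_ifs
  · rw [Set.compl_union_self, Set.ncard_univ, Nat.card_eq_fintype_card]
    omega
  · rw [Set.union_empty, hcompl, add_zero]
  · rw [Set.empty_union, zero_add]
  · rw [Set.union_empty, Set.ncard_empty]

lemma exists_mem_symmDiff_ncard_symmDiff_singleton_mem_Icc [Finite V] {A B : Set V}
    (hmA : m ≤ A.ncard) (hAk : A.ncard ≤ k) (hmB : m ≤ B.ncard) (hBk : B.ncard ≤ k) (hmk : m < k) (hAB : A ≠ B) :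
    ∃ v ∈ symmDiff A B, (symmDiff A {v}).ncard ∈ Set.Icc m k := by
  by_cases hadd : A.ncard < k ∧ (B \ A).Nonempty
  · obtain ⟨hAk', v, hvB, hvA⟩ := hadd
    refine ⟨v, Or.inr ⟨hvB, hvA⟩, ?_⟩
    rw [Set.ncard_symmDiff_singleton_of_notMem hvA, Set.mem_Icc]
    omega
  have hremove : m < A.ncard ∧ (A \ B).Nonempty := by
    rcases (B \ A).eq_empty_or_nonempty with hBA | hBA
    · have hBA : B ⊂ A := (Set.sdiff_eq_empty.1 hBA).ssubset_of_ne hAB.symm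
      have := Set.ncard_lt_ncard hBA
      exact ⟨by omega, Set.nonempty_of_ssubset hBA⟩
    · have hA : A.ncard = k := by
        by_contra; exact hadd ⟨by omega, hBA⟩
      refine ⟨by omega, Set.nonempty_iff_ne_empty.2 fun hAB' => ?_⟩
      have hAB : A ⊂ B := (Set.sdiff_eq_empty.1 hAB').ssubset_of_ne hAB
      have := Set.ncard_lt_ncard hAB
      omega
  obtain ⟨hmA', v, hvA, hvB⟩ := hremove
  refine ⟨v, Or.inl ⟨hvA, hvB⟩, ?_⟩
  rw [Set.ncard_symmDiff_singleton_of_mem hvA, Set.mem_Icc]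
  omega

lemma kDomGraph_reachable [Finite V] (hdom : ∀ S : Set V, IsDomSet G S ↔ m ≤ S.ncard)
    (hmk : m < k) (A B : {D : Set V // IsDomSet G D ∧ D.ncard ≤ k}) :
    (KDomGraph G k).Reachable A B := by
  induction hn : (symmDiff A.1 B.1).ncard using Nat.strong_induction_on generalizing A with
  | _ n ih =>
  by_cases hAB : A = B
  · exact hAB ▸ Reachable.refl A
  obtain ⟨v, hv, hmv, hvk⟩ := exists_mem_symmDiff_ncard_symmDiff_singleton_mem_Icc
    ((hdom _).1 A.2.1) A.2.2 ((hdom _).1 B.2.1) B.2.2 hmk (Subtype.coe_ne_coe.2 hAB)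
  let A' : {D : Set V // IsDomSet G D ∧ D.ncard ≤ k} := ⟨symmDiff A.1 {v}, (hdom _).2 hmv, hvk⟩
  have hAA' : (KDomGraph G k).Adj A A' := kDomGraph_adj_iff.2 ⟨v, rfl⟩
  have hA'B : (symmDiff A'.1 B.1).ncard < n := by
    rw [symmDiff_right_comm, Set.ncard_symmDiff_singleton_of_mem hv, hn]
    have := (Set.ncard_pos (Set.toFinite _)).2 ⟨v, hv⟩
    omega
  exact hAA'.reachable.trans (ih _ hA'B A' rfl)

lemma exists_kDomGraph_vertex_ncard_eq [Fintype V]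
    (hdom : ∀ S : Set V, IsDomSet G S ↔ m ≤ S.ncard) {j : ℕ} (hmj : m ≤ j) (hjk : j ≤ k)
    (hjn : j ≤ Fintype.card V) :
    ∃ A : {D : Set V // IsDomSet G D ∧ D.ncard ≤ k}, A.1.ncard = j := by
  obtain ⟨S, -, hS⟩ := Set.exists_subset_card_eq (s := (Set.univ : Set V)) (n := j)
    (by rwa [Set.ncard_univ, Nat.card_eq_fintype_card])
  exact ⟨⟨S, (hdom S).2 (hS ▸ hmj), hS ▸ hjk⟩, hS⟩

theorem isEulerian_kDomGraph_iff [Fintype V] (hdom : ∀ S : Set V, IsDomSet G S ↔ m ≤ S.ncard)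
    (hmk : m < k) (hkn : k < Fintype.card V) :
    IsEulerian (KDomGraph G k) ↔
      (Even (Fintype.card V) ↔ Even m) ∧ Even k ∧ (m + 2 ≤ k → Even (Fintype.card V)) := by
  have hdeg := ncard_neighborSet_kDomGraph_of_isDomSet_iff (k := k) hdom
  have hmn : m ≤ Fintype.card V := by omega
  constructor
  · rintro ⟨heven, -⟩
    obtain ⟨A, hA⟩ := exists_kDomGraph_vertex_ncard_eq hdom le_rfl hmk.le (by omega)
    obtain ⟨B, hB⟩ := exists_kDomGraph_vertex_ncard_eq hdom hmk.le le_rfl hkn.le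
    have hdegA := heven A
    have hdegB := heven B
    rw [hdeg, hA, if_pos hmk, if_neg (lt_irrefl m), add_zero, Nat.even_sub hmn] at hdegA
    rw [hdeg, hB, if_neg (lt_irrefl k), if_pos hmk, zero_add] at hdegB
    refine ⟨hdegA, hdegB, fun hmk2 => ?_⟩
    obtain ⟨C, hC⟩ := exists_kDomGraph_vertex_ncard_eq (k := k) (j := m + 1) hdom
      (by omega) (by omega) (by omega)
    have hdegC := heven C
    rwa [hdeg, hC, if_pos (by omega), if_pos (by omega), Nat.sub_add_cancel (by omega)] at hdegC
  · rintro ⟨hnm, hk, hn⟩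
    refine ⟨fun A => ?_, fun A _ C _ _ _ => kDomGraph_reachable hdom hmk A C⟩
    have hmA := (hdom A.1).1 A.2.1
    have hAk := A.2.2
    rw [hdeg]
    rcases hmA.eq_or_lt with hmA | hmA <;> rcases hAk.eq_or_lt with hAk | hAk
    · omega
    · rw [← hmA, if_pos hmk, if_neg (lt_irrefl m), add_zero, Nat.even_sub hmn]
      exact hnm
    · rwa [hAk, if_neg (lt_irrefl k), if_pos hmk, zero_add]
    · rw [if_pos hAk, if_pos hmA, Nat.sub_add_cancel (by omega)]
      exact hn (by omega)

end KDomGraph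

section Classification
variable {V : Type*} {G : SimpleGraph V} {m : ℕ}

lemma isCocktailParty_of_existsUnique_compl_adj (h : ∀ v, ∃! u, Gᶜ.Adj v u) :
    IsCocktailParty G := by
  choose f hf hfu using h
  refine ⟨f, fun v => (hfu (f v) v (hf v).symm).symm, fun v => (hf v).ne.symm, fun u v => ?_⟩
  constructor
  · intro huv
    exact ⟨huv.ne, fun hfu' => ((compl_adj G u v).1 (hfu' ▸ hf u)).2 huv⟩
  · rintro ⟨huv, hfuv⟩
    by_contra hnadj
    exact hfuv (hfu u v ((compl_adj G u v).2 ⟨huv, hnadj⟩)).symm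

lemma IsCocktailParty.ne_top [Nonempty V] (hG : IsCocktailParty G) : G ≠ ⊤ := by
  obtain ⟨f, -, hf, hadj⟩ := hG
  rintro rfl
  exact ((hadj _ _).1 (top_adj _ _ |>.2 (hf (Classical.arbitrary V)).symm)).2 rfl

lemma ncard_compl_neighborSet_lt (hdom : ∀ S : Set V, IsDomSet G S ↔ m ≤ S.ncard) (w : V) :
    (Gᶜ.neighborSet w).ncard < m := by
  by_contra! hle
  obtain ⟨u, hwu, huw⟩ := (hdom _).2 hle w Gᶜ.notMem_neighborSet_self
  exact ((compl_adj G w u).1 hwu).2 huw.symm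

lemma exists_compl_neighborSet_eq [Finite V] (hdom : ∀ S : Set V, IsDomSet G S ↔ m ≤ S.ncard)
    {S : Set V} (hS : S.ncard + 1 = m) : ∃ w, Gᶜ.neighborSet w = S := by
  obtain ⟨w, hSw⟩ := not_isDomSet_iff.1 (by rw [hdom]; omega : ¬ IsDomSet G S)
  have := ncard_compl_neighborSet_lt hdom w
  exact ⟨w, (Set.eq_of_subset_of_ncard_le hSw (by omega)).symm⟩

lemma le_two_of_isDomSet_iff [Fintype V] (hdom : ∀ S : Set V, IsDomSet G S ↔ m ≤ S.ncard)
    (hmn : m < Fintype.card V) : m ≤ 2 := by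
  classical
  by_contra! hm
  have hsurj : Finset.univ.powersetCard (m - 1) ⊆
      Finset.univ.image fun w => (Gᶜ.neighborSet w).toFinset := by
    intro s hs
    obtain ⟨w, hw⟩ := exists_compl_neighborSet_eq hdom (S := s)
      (by rw [Set.ncard_coe_finset, (Finset.mem_powersetCard.1 hs).2]; omega)
    exact Finset.mem_image.2 ⟨w, Finset.mem_univ w, by simp [hw]⟩
  have hle := (Finset.card_le_card hsurj).trans Finset.card_image_le
  rw [Finset.card_powersetCard, Finset.card_univ] at hle
  have := Nat.lt_choose_of_two_le (n := Fintype.card V) (j := m - 1) (by omega) (by omega)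
  omega

lemma eq_top_of_isDomSet_iff_one_le (hdom : ∀ S : Set V, IsDomSet G S ↔ 1 ≤ S.ncard) :
    G = ⊤ := by
  ext u v
  refine ⟨fun huv => huv.ne, fun huv => ?_⟩
  obtain ⟨w, hw, hwv⟩ := (hdom {u}).2 (by simp) v (by simpa using (Ne.symm huv))
  rwa [Set.mem_singleton_iff.1 hw] at hwv

lemma isCocktailParty_of_isDomSet_iff_two_le [Finite V]
    (hdom : ∀ S : Set V, IsDomSet G S ↔ 2 ≤ S.ncard) : IsCocktailParty G := by
  refine isCocktailParty_of_existsUnique_compl_adj fun v => ?_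
  obtain ⟨w, hvw⟩ := not_isDomSet_iff.1 (by simp [hdom] : ¬ IsDomSet G {v})
  have hw : Gᶜ.Adj v w := (Set.singleton_subset_iff.1 hvw).symm
  have hle := ncard_compl_neighborSet_lt hdom v
  exact ⟨w, hw, fun u hu =>
    (Set.ncard_le_one (Set.toFinite (Gᶜ.neighborSet v))).1 (by omega) u hu w hw⟩

end Classification

theorem kDomGraph_eulerian_iff_of_all_dominating_general {V : Type*} [Fintype V]
    (G : SimpleGraph V)
    (h : ∀ S : Set V, S.ncard = domNumber G → IsDomSet G S)
    (k : ℕ) (hk1 : domNumber G < k) (hk2 : k < Fintype.card V) :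
    IsEulerian (KDomGraph G k) ↔
      (G = ⊤ ∧ Odd (Fintype.card V) ∧ k = 2) ∨
      (Even (Fintype.card V) ∧ 4 ≤ Fintype.card V ∧ IsCocktailParty G ∧ Even k) := by
  have hdom := isDomSet_iff_domNumber_le h
  have : Nonempty V := Fintype.card_pos_iff.1 (by omega)
  have hγpos : 1 ≤ domNumber G :=
    Nat.one_le_iff_ne_zero.2 fun h0 => not_isDomSet_empty ((hdom ∅).2 (by simp [h0]))
  rw [isEulerian_kDomGraph_iff hdom hk1 hk2]
  obtain hγ | hγ : domNumber G = 1 ∨ domNumber G = 2 := by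
    have := le_two_of_isDomSet_iff hdom (by omega)
    omega
  · have hG := eq_top_of_isDomSet_iff_one_le (hγ ▸ hdom)
    have hcp : ¬ IsCocktailParty (⊤ : SimpleGraph V) := fun hc => hc.ne_top rfl
    rw [hγ] at hk1 ⊢
    simp only [hG, hcp, true_and, false_and, and_false, or_false, ← Nat.not_even_iff_odd,
      Nat.even_iff]
    omega
  · have hcp := isCocktailParty_of_isDomSet_iff_two_le (hγ ▸ hdom)
    have hG : G ≠ ⊤ := hcp.ne_top
    rw [hγ] at hk1 ⊢
    simp only [hG, hcp, false_and, false_or, true_and, Nat.even_iff, iff_true]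
    omega

/-- Let `G` be a connected graph on `n > 1` vertices in which every set of `γ(G)`
vertices is a dominating set, and let `γ(G) < k < n`.  Then the `k`-dominating graph of
`G` is Eulerian iff `G` is complete with `n` odd and `k = 2`, or `G` is the cocktail
party graph on an even number `n ≥ 4` of vertices and `k` is even. -/
theorem kDomGraph_eulerian_iff_of_all_dominating {V : Type*} [Fintype V]
    (G : SimpleGraph V) (hconn : G.Connected) (hn : 1 < Fintype.card V)
    (h : ∀ S : Set V, S.ncard = domNumber G → IsDomSet G S)
    (k : ℕ) (hk1 : domNumber G < k) (hk2 : k < Fintype.card V) :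
    IsEulerian (KDomGraph G k) ↔
      (G = ⊤ ∧ Odd (Fintype.card V) ∧ k = 2) ∨
      (Even (Fintype.card V) ∧ 4 ≤ Fintype.card V ∧ IsCocktailParty G ∧ Even k) :=
  kDomGraph_eulerian_iff_of_all_dominating_general G h k hk1 hk2
end

section
/- Let G be a finite simple graph on n ≥ 2 vertices and let G ∘ K₁ be its corona. Then every minimal dominating set of G ∘ K₁ has cardinality exactly n; in particular, γ(G ∘ K₁) = Γ(G ∘ K₁) = n, so G ∘ K₁ is well-dominated. -/
open SimpleGraph

/-- `D` is a minimal dominating set of `G`. -/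
def IsMinimalDomSet {V : Type*} (G : SimpleGraph V) (D : Set V) : Prop :=
  IsDomSet G D ∧ ∀ T ⊂ D, ¬ IsDomSet G T

/-- The upper domination number of `G`: the maximum cardinality of a minimal dominating set. -/
noncomputable def upperDomNumber {V : Type*} (G : SimpleGraph V) : ℕ :=
  sSup {n | ∃ D : Set V, IsMinimalDomSet G D ∧ D.ncard = n}

/-- The corona `G ∘ K₁` of `G`: attach a pendant vertex to every vertex of `G`. -/
def corona {V : Type*} (G : SimpleGraph V) : SimpleGraph (V ⊕ V) where
  Adj x y :=
    match x, y with
    | Sum.inl a, Sum.inl b => G.Adj a b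
    | Sum.inl a, Sum.inr b => a = b
    | Sum.inr a, Sum.inl b => a = b
    | Sum.inr _, Sum.inr _ => False
  symm := ⟨by
    rintro (a | a) (b | b) h
    · exact G.adj_symm h
    · exact h.symm
    · exact h.symm
    · exact h.elim⟩
  loopless := ⟨by
    rintro (a | a) h
    · exact G.irrefl h
    · exact h⟩


/-! Each pendant vertex `inr v` of `G ∘ K₁` has `inl v` as its only neighbour, so a dominating
set meets every pair `{inl v, inr v}`, while a minimal one never contains both (`inr v` would be
redundant). Hence folding `V ⊕ V` onto `V` maps a dominating set onto `V`, and a minimal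
dominating set bijectively onto `V`; the pendant vertices form a minimal dominating set. -/

section Domination

variable {V : Type*} {G : SimpleGraph V} {D : Set V}

lemma IsDomSet.diff_singleton {x u : V} (hD : IsDomSet G D) (hu : u ∈ D) (hux : G.Adj u x)
    (hN : ∀ w, G.Adj x w → w ∈ D) : IsDomSet G (D \ {x}) := by
  intro w hw
  by_cases hwx : w = x
  · subst hwx
    exact ⟨u, ⟨hu, hux.ne⟩, hux⟩
  · obtain ⟨y, hy, hyw⟩ := hD w fun hwD => hw ⟨hwD, hwx⟩
    refine ⟨y, ⟨hy, ?_⟩, hyw⟩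
    rintro rfl
    exact hw ⟨hN w hyw, hwx⟩

lemma IsMinimalDomSet.exists_adj_notMem {x u : V} (hD : IsMinimalDomSet G D) (hx : x ∈ D)
    (hu : u ∈ D) (hux : G.Adj u x) : ∃ w ∉ D, G.Adj x w := by
  by_contra! hN
  exact hD.2 _ (Set.sdiff_singleton_ssubset.mpr hx)
    (hD.1.diff_singleton hu hux fun w hxw => by_contra (hN w · hxw))

lemma domNumber_eq {n : ℕ} (hle : ∀ D, IsDomSet G D → n ≤ D.ncard) (hD : IsDomSet G D)
    (hcard : D.ncard = n) : domNumber G = n :=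
  le_antisymm (Nat.sInf_le ⟨D, hD, hcard⟩)
    (le_csInf ⟨n, D, hD, hcard⟩ fun _ ⟨D', hD', hcard'⟩ => hcard' ▸ hle D' hD')

lemma upperDomNumber_eq {n : ℕ} (hcard : ∀ D, IsMinimalDomSet G D → D.ncard = n)
    (hD : IsMinimalDomSet G D) : upperDomNumber G = n := by
  have : {m | ∃ D, IsMinimalDomSet G D ∧ D.ncard = m} = {n} := by
    ext m
    constructor
    · rintro ⟨D', hD', rfl⟩
      exact hcard D' hD'
    · rintro rfl
      exact ⟨D, hD, hcard D hD⟩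
  rw [upperDomNumber, this, csSup_singleton]

end Domination

section Corona

variable {V : Type*} {G : SimpleGraph V} {D : Set (V ⊕ V)}

lemma corona_adj_inr_iff {x : V ⊕ V} {v : V} :
    (corona G).Adj x (Sum.inr v) ↔ x = Sum.inl v := by
  rcases x with a | a
  · exact ⟨congrArg Sum.inl, fun h => Sum.inl_injective h⟩
  · exact ⟨False.elim, Sum.inl_ne_inr.symm⟩

lemma IsDomSet.corona_inl_mem_or_inr_mem (hD : IsDomSet (corona G) D) (v : V) :
    Sum.inl v ∈ D ∨ Sum.inr v ∈ D := by
  by_cases hv : Sum.inr v ∈ D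
  · exact Or.inr hv
  · obtain ⟨u, hu, huv⟩ := hD _ hv
    exact Or.inl (corona_adj_inr_iff.mp huv ▸ hu)

lemma IsMinimalDomSet.corona_inr_notMem_of_inl_mem (hD : IsMinimalDomSet (corona G) D) {v : V}
    (hv : Sum.inl v ∈ D) : Sum.inr v ∉ D := fun hv' => by
  obtain ⟨w, hw, hvw⟩ := hD.exists_adj_notMem hv' hv rfl
  exact hw (corona_adj_inr_iff.mp hvw.symm ▸ hv)

lemma IsDomSet.corona_surjOn_fold (hD : IsDomSet (corona G) D) :
    Set.SurjOn (Sum.elim id id) D Set.univ := fun v _ => by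
  rcases hD.corona_inl_mem_or_inr_mem v with h | h
  exacts [⟨_, h, rfl⟩, ⟨_, h, rfl⟩]

lemma IsMinimalDomSet.corona_bijOn_fold (hD : IsMinimalDomSet (corona G) D) :
    Set.BijOn (Sum.elim id id) D Set.univ := by
  refine ⟨Set.mapsTo_univ _ _, ?_, hD.1.corona_surjOn_fold⟩
  rintro (a | a) ha (b | b) hb (rfl : a = b)
  · rfl
  · exact absurd hb (hD.corona_inr_notMem_of_inl_mem ha)
  · exact absurd ha (hD.corona_inr_notMem_of_inl_mem hb)
  · rfl

lemma IsDomSet.corona_card_le_ncard [Finite V] (hD : IsDomSet (corona G) D) :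
    Nat.card V ≤ D.ncard := by
  rw [← Set.ncard_univ, ← hD.corona_surjOn_fold.image_eq_of_mapsTo (Set.mapsTo_univ _ _)]
  exact Set.ncard_image_le

lemma IsMinimalDomSet.corona_ncard (hD : IsMinimalDomSet (corona G) D) :
    D.ncard = Nat.card V := by
  rw [hD.corona_bijOn_fold.ncard_eq, Set.ncard_univ]

lemma corona_isMinimalDomSet_range_inr : IsMinimalDomSet (corona G) (Set.range Sum.inr) := by
  refine ⟨?_, ?_⟩
  · rintro (a | a) ha
    · exact ⟨Sum.inr a, ⟨a, rfl⟩, rfl⟩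
    · exact absurd ⟨a, rfl⟩ ha
  · rintro T ⟨hTsub, hTne⟩ hT
    obtain ⟨_, ⟨a, rfl⟩, ha⟩ := Set.not_subset.mp hTne
    obtain ⟨u, hu, hua⟩ := hT _ ha
    obtain ⟨b, rfl⟩ := hTsub hu
    exact Sum.inr_ne_inl (corona_adj_inr_iff.mp hua)

end Corona

theorem corona_well_dominated_general {V : Type*} [Fintype V] (G : SimpleGraph V) :
    (∀ S : Set (V ⊕ V), IsMinimalDomSet (corona G) S → S.ncard = Fintype.card V) ∧
    domNumber (corona G) = Fintype.card V ∧
    upperDomNumber (corona G) = Fintype.card V := by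
  have hcard : ∀ S : Set (V ⊕ V), IsMinimalDomSet (corona G) S → S.ncard = Fintype.card V :=
    fun S hS => hS.corona_ncard.trans Nat.card_eq_fintype_card
  have hpendant := corona_isMinimalDomSet_range_inr (G := G)
  refine ⟨hcard, ?_, upperDomNumber_eq hcard hpendant⟩
  refine domNumber_eq (fun D hD => ?_) hpendant.1 (hcard _ hpendant)
  exact Nat.card_eq_fintype_card (α := V) ▸ hD.corona_card_le_ncard

/-- Every minimal dominating set of the corona `G ∘ K₁` of a graph `G` on `n ≥ 2`
vertices has cardinality exactly `n`; in particular
`γ(G ∘ K₁) = Γ(G ∘ K₁) = n`, so the corona is well-dominated. -/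
theorem corona_well_dominated {V : Type*} [Fintype V] (G : SimpleGraph V)
    (hn : 2 ≤ Fintype.card V) :
    (∀ S : Set (V ⊕ V), IsMinimalDomSet (corona G) S → S.ncard = Fintype.card V) ∧
    domNumber (corona G) = Fintype.card V ∧
    upperDomNumber (corona G) = Fintype.card V :=
  corona_well_dominated_general G
end
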